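/- arXiv:1908.05813 — 4 statements merged into one kernel-verified Lean document; each statement's English description precedes it below -/
import Mathlib

section
/- The polynomial f_0(z) = z - 1/(d z^d) is injective on the unit circle: if z, w lie on the unit circle in the complex plane and z - 1/(d z^d) = w - 1/(d w^d), then z = w. -/
open Complex

/-! If `z ≠ w` lie on the unit circle and `f₀ z = f₀ w`, clearing denominators gives
`d (z - w) z^d w^d = w^d - z^d`, hence `‖z^d - w^d‖ = d ‖z - w‖`. But for distinct unit
complex numbers `‖z^n - w^n‖ < n ‖z - w‖` as soon as `n ≥ 2`: for `n = 2` this is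
`‖z + w‖ < 2` (strict convexity of the norm), and
`z^(n+1) - w^(n+1) = z^n (z - w) + w (z^n - w^n)` propagates the strict bound. -/

lemma norm_pow_sub_pow_lt {z w : ℂ} (hz : ‖z‖ = 1) (hw : ‖w‖ = 1) (hne : z ≠ w)
    {n : ℕ} (hn : 2 ≤ n) : ‖z ^ n - w ^ n‖ < n * ‖z - w‖ := by
  have hzw : 0 < ‖z - w‖ := norm_pos_iff.2 (sub_ne_zero.2 hne)
  induction n, hn using Nat.le_induction with
  | base =>
    have hsum : ‖z + w‖ < 2 := by
      have := norm_add_lt_of_not_sameRay ((not_sameRay_iff_of_norm_eq (hz.trans hw.symm)).2 hne)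
      rwa [hz, hw, one_add_one_eq_two] at this
    calc ‖z ^ 2 - w ^ 2‖ = ‖z + w‖ * ‖z - w‖ := by rw [← norm_mul, sq_sub_sq]
      _ < 2 * ‖z - w‖ := by gcongr
      _ = (2 : ℕ) * ‖z - w‖ := by norm_num
  | succ n _ ih =>
    calc ‖z ^ (n + 1) - w ^ (n + 1)‖ = ‖z ^ n * (z - w) + w * (z ^ n - w ^ n)‖ := by
          congr 1; ring
      _ ≤ ‖z - w‖ + ‖z ^ n - w ^ n‖ := by
          refine (norm_add_le _ _).trans_eq ?_
          rw [norm_mul, norm_mul, norm_pow, hz, hw, one_pow, one_mul, one_mul]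
      _ < ‖z - w‖ + n * ‖z - w‖ := by gcongr
      _ = ((n + 1 : ℕ) : ℝ) * ‖z - w‖ := by push_cast; ring

lemma norm_pow_sub_pow_eq_of_sub_one_div_eq {d : ℕ} (hd : d ≠ 0) {z w : ℂ}
    (hz : ‖z‖ = 1) (hw : ‖w‖ = 1) (h : z - 1 / (d * z ^ d) = w - 1 / (d * w ^ d)) :
    ‖z ^ d - w ^ d‖ = d * ‖z - w‖ := by
  have hz0 : z ≠ 0 := norm_ne_zero_iff.1 (by rw [hz]; exact one_ne_zero)
  have hw0 : w ≠ 0 := norm_ne_zero_iff.1 (by rw [hw]; exact one_ne_zero)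
  have hd0 : (d : ℂ) ≠ 0 := Nat.cast_ne_zero.2 hd
  have key : z ^ d - w ^ d = d * (w - z) * z ^ d * w ^ d := by
    field_simp at h
    linear_combination h
  rw [key, norm_mul, norm_mul, norm_mul, norm_pow, norm_pow, hz, hw, Complex.norm_natCast, one_pow,
    norm_sub_rev]
  ring

/-- The polynomial `f₀(z) = z - 1/(d z^d)` is injective on the unit circle:
if `z, w` lie on the unit circle and `f₀ z = f₀ w`, then `z = w`. -/
theorem stmt_0 (d : ℕ) (hd : 2 ≤ d) (z w : ℂ)
    (hz : ‖z‖ = 1) (hw : ‖w‖ = 1)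
    (h : z - 1 / (d * z ^ d) = w - 1 / (d * w ^ d)) : z = w := by
  by_contra hne
  have heq := norm_pow_sub_pow_eq_of_sub_one_div_eq (by omega) hz hw h
  exact (norm_pow_sub_pow_lt hz hw hne hd).ne heq
end

section
/- The anti-polynomial p(z) = conj((3z - z³)/2) has exactly 7 fixed points in ℂ, namely 0, ±1, and (±√7 ± i)/2. -/
open Complex

private lemma conj_eq_iff'' (w z : ℂ) : starRingEnd ℂ w = z ↔ w = starRingEnd ℂ z :=
  ⟨fun h => by rw [← h]; simp, fun h => by rw [h]; simp⟩

private lemma mem_iff'' (z : ℂ) : starRingEnd ℂ ((3 * z - z ^ 3) / 2) = z ↔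
    z.re * (1 - z.re ^ 2 + 3 * z.im ^ 2) = 0 ∧ z.im * (5 - 3 * z.re ^ 2 + z.im ^ 2) = 0 := by
  rw [conj_eq_iff'', div_eq_iff (two_ne_zero), Complex.ext_iff]
  simp only [pow_succ, pow_zero, one_mul, Complex.mul_re, Complex.mul_im, Complex.sub_re,
    Complex.sub_im, Complex.conj_re, Complex.conj_im, Complex.re_ofNat, Complex.im_ofNat]
  constructor
  · rintro ⟨h1, h2⟩
    exact ⟨by linear_combination h1, by linear_combination h2⟩
  · rintro ⟨h1, h2⟩
    exact ⟨by linear_combination h1, by linear_combination h2⟩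

private lemma ne_of_im' {u v : ℂ} (h : u.im ≠ v.im) : u ≠ v := fun huv => h (by rw [huv])
private lemma ne_of_re' {u v : ℂ} (h : u.re ≠ v.re) : u ≠ v := fun huv => h (by rw [huv])

/-- The anti-polynomial `p(z) = conj((3z - z³)/2)` has exactly 7 fixed points in `ℂ`,
namely `0`, `±1`, and `(±√7 ± i)/2`. -/
theorem stmt_6 :
    {z : ℂ | starRingEnd ℂ ((3 * z - z ^ 3) / 2) = z} =
      {0, 1, -1, ((Real.sqrt 7 : ℂ) + Complex.I) / 2, ((Real.sqrt 7 : ℂ) - Complex.I) / 2,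
        (-(Real.sqrt 7 : ℂ) + Complex.I) / 2, (-(Real.sqrt 7 : ℂ) - Complex.I) / 2} ∧
    {z : ℂ | starRingEnd ℂ ((3 * z - z ^ 3) / 2) = z}.ncard = 7 := by
  set s : ℝ := Real.sqrt 7 with hsdef
  have hs : s ^ 2 = 7 := Real.sq_sqrt (by norm_num)
  have hs2 : (2:ℝ) < s := by nlinarith [hs, Real.sqrt_nonneg 7]
  -- re/im of the four quadrant points
  have ra : (((s:ℂ) + Complex.I) / 2).re = s / 2 := by simp [Complex.div_re]
  have ia : (((s:ℂ) + Complex.I) / 2).im = 1 / 2 := by simp [Complex.div_im]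
  have rb : (((s:ℂ) - Complex.I) / 2).re = s / 2 := by simp [Complex.div_re]
  have ib : (((s:ℂ) - Complex.I) / 2).im = -(1 / 2) := by simp [Complex.div_im]; ring
  have rc : ((-(s:ℂ) + Complex.I) / 2).re = -(s / 2) := by simp [Complex.div_re]; ring
  have ic : ((-(s:ℂ) + Complex.I) / 2).im = 1 / 2 := by simp [Complex.div_im]
  have rd : ((-(s:ℂ) - Complex.I) / 2).re = -(s / 2) := by simp [Complex.div_re]; ring
  have id' : ((-(s:ℂ) - Complex.I) / 2).im = -(1 / 2) := by simp [Complex.div_im]; ring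
  have hset : {z : ℂ | starRingEnd ℂ ((3 * z - z ^ 3) / 2) = z} =
      {0, 1, -1, ((s : ℂ) + Complex.I) / 2, ((s : ℂ) - Complex.I) / 2,
        (-(s : ℂ) + Complex.I) / 2, (-(s : ℂ) - Complex.I) / 2} := by
    ext z
    rw [Set.mem_setOf_eq, mem_iff'']
    simp only [Set.mem_insert_iff, Set.mem_singleton_iff]
    constructor
    · rintro ⟨h1, h2⟩
      rcases mul_eq_zero.mp h1 with hx | hx
      · rcases mul_eq_zero.mp h2 with hy | hy
        · left
          rw [Complex.ext_iff]
          simp [hx, hy]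
        · exfalso; nlinarith [sq_nonneg z.im]
      · rcases mul_eq_zero.mp h2 with hy | hy
        · have hx1 : (z.re - 1) * (z.re + 1) = 0 := by nlinarith
          rcases mul_eq_zero.mp hx1 with h | h
          · right; left
            rw [Complex.ext_iff]
            constructor
            · simp only [Complex.one_re]; linarith
            · simp [hy]
          · right; right; left
            rw [Complex.ext_iff]
            constructor
            · simp only [Complex.neg_re, Complex.one_re]; linarith
            · simp [hy]
        · have hx2 : z.re ^ 2 = 7 / 4 := by linarith
          have hy2 : z.im ^ 2 = 1 / 4 := by linarith
          have hxf : (z.re - s / 2) * (z.re + s / 2) = 0 := by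
            linear_combination hx2 - hs / 4
          have hyf : (z.im - 1 / 2) * (z.im + 1 / 2) = 0 := by
            linear_combination hy2
          rcases mul_eq_zero.mp hxf with hxv | hxv <;>
            rcases mul_eq_zero.mp hyf with hyv | hyv
          · right; right; right; left
            rw [Complex.ext_iff, ra, ia]; constructor <;> linarith
          · right; right; right; right; left
            rw [Complex.ext_iff, rb, ib]; constructor <;> linarith
          · right; right; right; right; right; left
            rw [Complex.ext_iff, rc, ic]; constructor <;> linarith
          · right; right; right; right; right; right
            rw [Complex.ext_iff, rd, id']; constructor <;> linarith
    · rintro (rfl | rfl | rfl | rfl | rfl | rfl | rfl)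
      · norm_num
      · norm_num
      · norm_num
      · rw [ra, ia]
        constructor
        · linear_combination (-(s) / 8) * hs
        · linear_combination (-3 / 8 : ℝ) * hs
      · rw [rb, ib]
        constructor
        · linear_combination (-(s) / 8) * hs
        · linear_combination (3 / 8 : ℝ) * hs
      · rw [rc, ic]
        constructor
        · linear_combination (s / 8) * hs
        · linear_combination (-3 / 8 : ℝ) * hs
      · rw [rd, id']
        constructor
        · linear_combination (s / 8) * hs
        · linear_combination (3 / 8 : ℝ) * hs
  refine ⟨hset, ?_⟩
  rw [hset]
  have hspos : (0:ℝ) < s / 2 := by linarith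
  have n0 : (0:ℂ) ∉ ({1, -1, ((s : ℂ) + Complex.I) / 2, ((s : ℂ) - Complex.I) / 2,
      (-(s : ℂ) + Complex.I) / 2, (-(s : ℂ) - Complex.I) / 2} : Set ℂ) := by
    simp only [Set.mem_insert_iff, Set.mem_singleton_iff]
    push_neg
    refine ⟨by norm_num, by norm_num, ne_of_im' ?_, ne_of_im' ?_, ne_of_im' ?_, ne_of_im' ?_⟩ <;>
      simp [ia, ib, ic, id']
  have n1 : (1:ℂ) ∉ ({-1, ((s : ℂ) + Complex.I) / 2, ((s : ℂ) - Complex.I) / 2,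
      (-(s : ℂ) + Complex.I) / 2, (-(s : ℂ) - Complex.I) / 2} : Set ℂ) := by
    simp only [Set.mem_insert_iff, Set.mem_singleton_iff]
    push_neg
    refine ⟨by norm_num, ne_of_im' ?_, ne_of_im' ?_, ne_of_im' ?_, ne_of_im' ?_⟩ <;>
      simp [ia, ib, ic, id']
  have n2 : (-1:ℂ) ∉ ({((s : ℂ) + Complex.I) / 2, ((s : ℂ) - Complex.I) / 2,
      (-(s : ℂ) + Complex.I) / 2, (-(s : ℂ) - Complex.I) / 2} : Set ℂ) := by
    simp only [Set.mem_insert_iff, Set.mem_singleton_iff]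
    push_neg
    refine ⟨ne_of_im' ?_, ne_of_im' ?_, ne_of_im' ?_, ne_of_im' ?_⟩ <;>
      simp [ia, ib, ic, id']
  have n3 : ((s : ℂ) + Complex.I) / 2 ∉ ({((s : ℂ) - Complex.I) / 2,
      (-(s : ℂ) + Complex.I) / 2, (-(s : ℂ) - Complex.I) / 2} : Set ℂ) := by
    simp only [Set.mem_insert_iff, Set.mem_singleton_iff]
    push_neg
    refine ⟨ne_of_im' ?_, ne_of_re' ?_, ne_of_im' ?_⟩
    · rw [ia, ib]; norm_num
    · rw [ra, rc]; intro h; linarith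
    · rw [ia, id']; norm_num
  have n4 : ((s : ℂ) - Complex.I) / 2 ∉ ({(-(s : ℂ) + Complex.I) / 2,
      (-(s : ℂ) - Complex.I) / 2} : Set ℂ) := by
    simp only [Set.mem_insert_iff, Set.mem_singleton_iff]
    push_neg
    refine ⟨ne_of_im' ?_, ne_of_re' ?_⟩
    · rw [ib, ic]; norm_num
    · rw [rb, rd]; intro h; linarith
  have n5 : (-(s : ℂ) + Complex.I) / 2 ∉ ({(-(s : ℂ) - Complex.I) / 2} : Set ℂ) := by
    simp only [Set.mem_singleton_iff]
    exact ne_of_im' (by rw [ic, id']; norm_num)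
  rw [Set.ncard_insert_of_notMem n0, Set.ncard_insert_of_notMem n1,
    Set.ncard_insert_of_notMem n2, Set.ncard_insert_of_notMem n3,
    Set.ncard_insert_of_notMem n4, Set.ncard_insert_of_notMem n5,
    Set.ncard_singleton]
end

section
/- If f(z) = z + ∑_{n=1}^∞ a_n/z^n is holomorphic and injective on {z : |z| > 1} (extended by f(∞) = ∞), and f'(1/z̄-reflected symmetry) holds in the sense f'(1/z) = z^{d+1} · conj(f'(conj(z))) with f a Laurent polynomial of the form z + a_1/z + ⋯ + a_d/z^d and a_d = -1/d, then the coefficients satisfy: for d = 2n even, a_k = ((2n-1-k)/k)·conj(a_{2n-1-k}) for n ≤ k ≤ 2n-2. -/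
open Complex Finset Polynomial

theorem hasDerivAt_add_sum_div_pow {𝕜 : Type*} [NontriviallyNormedField 𝕜] (d : ℕ) (a : ℕ → 𝕜)
    {z : 𝕜} (hz : z ≠ 0) :
    HasDerivAt (fun w => w + ∑ k ∈ Icc 1 d, a k / w ^ k)
      (1 - ∑ k ∈ Icc 1 d, (k : 𝕜) * a k / z ^ (k + 1)) z := by
  rw [sub_eq_add_neg, ← sum_neg_distrib]
  refine (hasDerivAt_id z).add (HasDerivAt.fun_sum fun k hk => ?_)
  refine ((hasDerivAt_const z (a k)).fun_div (hasDerivAt_pow k z)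
    (pow_ne_zero _ hz)).congr_deriv ?_
  obtain ⟨k, rfl⟩ : ∃ i, k = i + 1 := Nat.exists_eq_add_of_le' (mem_Icc.mp hk).1
  field_simp
  simp only [Nat.cast_add, Nat.cast_one, add_tsub_cancel_right]
  ring

theorem deriv_eq_of_eq_add_sum_div_pow {𝕜 : Type*} [NontriviallyNormedField 𝕜] {d : ℕ}
    {a : ℕ → 𝕜} {f : 𝕜 → 𝕜} (hf : ∀ z : 𝕜, z ≠ 0 → f z = z + ∑ k ∈ Icc 1 d, a k / z ^ k)
    {z : 𝕜} (hz : z ≠ 0) :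
    deriv f z = 1 - ∑ k ∈ Icc 1 d, (k : 𝕜) * a k / z ^ (k + 1) := by
  have hfz : f =ᶠ[nhds z] fun w => w + ∑ k ∈ Icc 1 d, a k / w ^ k :=
    eventually_ne_nhds hz |>.mono hf
  rw [hfz.deriv_eq, (hasDerivAt_add_sum_div_pow d a hz).deriv]

theorem coeff_sum_C_mul_X_pow_succ {R : Type*} [Semiring R] (d : ℕ) (c : ℕ → R) {m : ℕ}
    (hm : m ∈ Icc 1 d) :
    (∑ j ∈ Icc 1 d, C (c j) * X ^ (j + 1)).coeff (m + 1) = c m := by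
  simp only [finsetSum_coeff, coeff_C_mul_X_pow, Nat.add_right_cancel_iff]
  rw [sum_ite_eq, if_pos hm]

theorem coeff_sum_C_mul_X_pow_sub {R : Type*} [Semiring R] (d : ℕ) (c : ℕ → R) {m : ℕ}
    (hm : m < d) :
    (∑ j ∈ Icc 1 d, C (c j) * X ^ (d - j)).coeff m = c (d - m) := by
  simp only [finsetSum_coeff, coeff_C_mul_X_pow]
  rw [sum_congr rfl fun j hj => if_congr (show m = d - j ↔ d - m = j by
    have := (mem_Icc.mp hj).2; omega) rfl rfl, sum_ite_eq, if_pos (mem_Icc.mpr ⟨by omega, by omega⟩)]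

section FunctionalEquation

variable {d : ℕ} {a : ℕ → ℂ} {f : ℂ → ℂ}

/-- Multiplied out, `f'(1/z) = z^(d+1) · conj(f'(conj z))` is an identity between polynomials
in `z`, valid on `z ≠ 0` and hence everywhere. -/
theorem polynomial_eq_of_deriv_one_div_eq
    (hf : ∀ z : ℂ, z ≠ 0 → f z = z + ∑ k ∈ Icc 1 d, a k / z ^ k)
    (hfe : ∀ z : ℂ, z ≠ 0 →
      deriv f (1 / z) = z ^ (d + 1) * starRingEnd ℂ (deriv f (starRingEnd ℂ z))) :
    (1 : ℂ[X]) - ∑ j ∈ Icc 1 d, C ((j : ℂ) * a j) * X ^ (j + 1) =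
      X ^ (d + 1) - ∑ j ∈ Icc 1 d, C ((j : ℂ) * starRingEnd ℂ (a j)) * X ^ (d - j) := by
  refine eq_of_infinite_eval_eq _ _
    ((Set.finite_singleton (0 : ℂ)).infinite_compl.mono fun z (hz : z ≠ 0) => ?_)
  have h := hfe z hz
  rw [deriv_eq_of_eq_add_sum_div_pow hf (by simpa using hz),
    deriv_eq_of_eq_add_sum_div_pow hf (by simpa using hz)] at h
  simp only [Set.mem_ofPred_eq, eval_sub, eval_one, eval_pow, eval_X, eval_finsetSum, eval_mul,
    eval_C]
  convert h using 2
  · refine sum_congr rfl fun j _ => ?_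
    rw [one_div, inv_pow, div_inv_eq_mul]
  · rw [map_sub, map_one, mul_sub, mul_one, map_sum, mul_sum]
    refine congrArg _ (sum_congr rfl fun j hj => ?_)
    have hjd := (mem_Icc.mp hj).2
    rw [show d - j = d + 1 - (j + 1) by omega, pow_sub₀ _ hz (by omega)]
    simp only [map_div₀, map_mul, map_natCast, map_pow, conj_conj]
    ring

theorem natCast_mul_eq_mul_conj_of_deriv_one_div_eq
    (hf : ∀ z : ℂ, z ≠ 0 → f z = z + ∑ k ∈ Icc 1 d, a k / z ^ k)
    (hfe : ∀ z : ℂ, z ≠ 0 →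
      deriv f (1 / z) = z ^ (d + 1) * starRingEnd ℂ (deriv f (starRingEnd ℂ z)))
    {k : ℕ} (hk : 1 ≤ k) (hkd : k + 1 < d) :
    (k : ℂ) * a k = ((d - 1 - k : ℕ) : ℂ) * starRingEnd ℂ (a (d - 1 - k)) := by
  have h := congrArg (coeff · (k + 1)) (polynomial_eq_of_deriv_one_div_eq hf hfe)
  simp only [coeff_sub, coeff_one, coeff_X_pow, if_neg (show k + 1 ≠ 0 by omega),
    if_neg (show k + 1 ≠ d + 1 by omega),
    coeff_sum_C_mul_X_pow_succ d (fun j => (j : ℂ) * a j) (mem_Icc.mpr ⟨hk, by omega⟩),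
    coeff_sum_C_mul_X_pow_sub d (fun j => (j : ℂ) * starRingEnd ℂ (a j)) hkd] at h
  rw [show d - 1 - k = d - (k + 1) by omega]
  linear_combination -h

end FunctionalEquation

theorem stmt_7_general (n : ℕ) (hn : 1 ≤ n) (d : ℕ) (hd : d = 2 * n) (a : ℕ → ℂ)
    (f : ℂ → ℂ) (hf : ∀ z : ℂ, z ≠ 0 → f z = z + ∑ k ∈ Finset.Icc 1 d, a k / z ^ k)
    (hfe : ∀ z : ℂ, z ≠ 0 →
      deriv f (1 / z) = z ^ (d + 1) * starRingEnd ℂ (deriv f (starRingEnd ℂ z))) :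
    ∀ k : ℕ, n ≤ k → k ≤ 2 * n - 2 →
      a k = (((2 * n - 1 - k : ℕ) : ℂ) / (k : ℂ)) * starRingEnd ℂ (a (2 * n - 1 - k)) := by
  intro k hnk hk
  subst hd
  have hk0 : (k : ℂ) ≠ 0 := Nat.cast_ne_zero.mpr (by omega)
  rw [div_mul_eq_mul_div, eq_div_iff hk0, mul_comm]
  exact natCast_mul_eq_mul_conj_of_deriv_one_div_eq hf hfe (by omega) (by omega)

/-- Let `d = 2n` be even and `f(z) = z + a₁/z + ⋯ + a_d/z^d` with `a_d = -1/d`, holomorphic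
and injective on `{|z| > 1}`, satisfying the functional equation
`f'(1/z) = z^(d+1) · conj(f'(conj z))`. Then for `n ≤ k ≤ 2n-2` one has
`a_k = ((2n-1-k)/k) · conj(a_{2n-1-k})`. -/
theorem stmt_7 (n : ℕ) (hn : 1 ≤ n) (d : ℕ) (hd : d = 2 * n) (a : ℕ → ℂ)
    (had : a d = -1 / d)
    (f : ℂ → ℂ) (hf : ∀ z : ℂ, z ≠ 0 → f z = z + ∑ k ∈ Finset.Icc 1 d, a k / z ^ k)
    (hhol : DifferentiableOn ℂ f {z : ℂ | 1 < ‖z‖})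
    (hinj : Set.InjOn f {z : ℂ | 1 < ‖z‖})
    (hfe : ∀ z : ℂ, z ≠ 0 →
      deriv f (1 / z) = z ^ (d + 1) * starRingEnd ℂ (deriv f (starRingEnd ℂ z))) :
    ∀ k : ℕ, n ≤ k → k ≤ 2 * n - 2 →
      a k = (((2 * n - 1 - k : ℕ) : ℂ) / (k : ℂ)) * starRingEnd ℂ (a (2 * n - 1 - k)) :=
  stmt_7_general n hn d hd a f hf hfe
end

section
/- Let f be a polynomial of degree d of the form f(z) = z + a₂z² + ⋯ + a_d z^d with a_d = 1/d that is injective on the open unit disc. Then f has d - 1 critical points counted with multiplicity, all lying on the unit circle. -/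
/-!
`f'` is a polynomial of degree `d - 1`, monic because `d * a_d = 1`, with constant term `1`;
so the product of its roots has modulus `1`. A function analytic at `w` and injective near `w`
has `f'(w) ≠ 0`: otherwise `f - f(w) = φⁿ` near `w` with `n ≥ 2` and `φ` a local
biholomorphism onto a neighbourhood of `0`, on which `z ↦ zⁿ` is not injective.
Hence every root of `f'` has modulus at least `1`, and therefore exactly `1`.
-/

open Complex Finset
open Filter Topology Polynomial

lemma AnalyticAt.exists_eventually_pow_eq {g : ℂ → ℂ} {w : ℂ} (hg : AnalyticAt ℂ g w)
    (hgw : g w ≠ 0) {n : ℕ} (hn : n ≠ 0) :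
    ∃ ψ : ℂ → ℂ, AnalyticAt ℂ ψ w ∧ ∀ᶠ z in 𝓝 w, ψ z ^ n = g z := by
  obtain ⟨u, hu⟩ := IsAlgClosed.exists_pow_nat_eq (g w) (Nat.pos_of_ne_zero hn)
  have hnC : (n : ℂ) ≠ 0 := Nat.cast_ne_zero.2 hn
  -- `g / g w` stays near `1`, inside the slit plane where `log` is analytic
  refine ⟨fun z => u * Complex.exp (Complex.log (g z / g w) / n), ?_, ?_⟩
  · refine analyticAt_const.mul (((hg.div analyticAt_const hgw).clog ?_).div analyticAt_const
      hnC).cexp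
    simp [div_self hgw, one_mem_slitPlane]
  · filter_upwards [hg.continuousAt.eventually_ne hgw] with z hz
    rw [mul_pow, ← exp_nat_mul, mul_div_cancel₀ _ hnC, exp_log (div_ne_zero hz hgw), hu,
      mul_div_cancel₀ _ hgw]

lemma not_injOn_pow_of_mem_nhds_zero {n : ℕ} (hn : 2 ≤ n) {s : Set ℂ} (hs : s ∈ 𝓝 0) :
    ¬ Set.InjOn (· ^ n) s := by
  intro hinj
  obtain ⟨ε, hε, hball⟩ := Metric.mem_nhds_iff.1 hs
  have hprim : IsPrimitiveRoot (exp (2 * Real.pi * I / n)) n :=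
    isPrimitiveRoot_exp n (by omega)
  set ζ := exp (2 * Real.pi * I / n)
  set v : ℂ := ((ε / 2 : ℝ) : ℂ)
  have hv : ‖v‖ < ε := by
    rw [norm_real, Real.norm_of_nonneg (by positivity)]; linarith
  have hvs : v ∈ s := hball (mem_ball_zero_iff.2 hv)
  have hζvs : ζ * v ∈ s := by
    refine hball (mem_ball_zero_iff.2 ?_)
    rwa [norm_mul, norm_eq_one_of_pow_eq_one hprim.pow_eq_one (by omega), one_mul]
  have hv0 : v ≠ 0 := ofReal_ne_zero.2 (by positivity)
  have := hinj hζvs hvs (by simp only [mul_pow, hprim.pow_eq_one, one_mul])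
  exact hprim.ne_one (by omega) (mul_right_cancel₀ hv0 (this.trans (one_mul v).symm))

lemma AnalyticAt.exists_eventually_eq_pow {F : ℂ → ℂ} {w : ℂ} (hF : AnalyticAt ℂ F w)
    (hFw : F w = 0) (hne : ¬ ∀ᶠ z in 𝓝 w, F z = 0) :
    ∃ n ≠ 0, ∃ φ : ℂ → ℂ, AnalyticAt ℂ φ w ∧ φ w = 0 ∧ deriv φ w ≠ 0 ∧
      ∀ᶠ z in 𝓝 w, F z = φ z ^ n := by
  obtain ⟨n, hn⟩ := ENat.ne_top_iff_exists.1 (mt analyticOrderAt_eq_top.1 hne)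
  obtain ⟨g, hg, hgw, hFg⟩ := hF.analyticOrderAt_eq_natCast.1 hn.symm
  have hn0 : n ≠ 0 := by
    rintro rfl
    simpa [hFw, eq_comm, hgw] using hFg.self_of_nhds
  obtain ⟨ψ, hψ, hψg⟩ := hg.exists_eventually_pow_eq hgw hn0
  have hφ : HasDerivAt (fun z => (z - w) * ψ z) (1 * ψ w + (w - w) * deriv ψ w) w :=
    ((hasDerivAt_id w).sub_const w).mul hψ.differentiableAt.hasDerivAt
  refine ⟨n, hn0, fun z => (z - w) * ψ z, (analyticAt_id.sub analyticAt_const).mul hψ,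
    by simp, ?_, ?_⟩
  · rw [hφ.deriv, sub_self, zero_mul, add_zero, one_mul]
    rintro hψw
    exact hgw (by rw [← hψg.self_of_nhds, hψw, zero_pow hn0])
  · filter_upwards [hFg, hψg] with z hz hψz
    rw [hz, mul_pow, hψz, smul_eq_mul]

lemma AnalyticAt.deriv_ne_zero_of_injOn {f : ℂ → ℂ} {w : ℂ} {s : Set ℂ} (hf : AnalyticAt ℂ f w)
    (hs : s ∈ 𝓝 w) (hinj : Set.InjOn f s) : deriv f w ≠ 0 := by
  intro hder
  have hne : ¬ ∀ᶠ z in 𝓝 w, f z - f w = 0 := by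
    intro hconst
    have hs' : ∀ᶠ z in 𝓝 w, z ∈ s := hs
    obtain ⟨z, ⟨hzs, hz⟩, hzw⟩ := ((eventually_nhdsWithin_of_eventually_nhds (s := {w}ᶜ)
      (hs'.and hconst)).and self_mem_nhdsWithin).exists
    exact hzw (hinj hzs (mem_of_mem_nhds hs) (sub_eq_zero.1 hz))
  obtain ⟨n, hn0, φ, hφ, hφw, hφ', hfφ⟩ :=
    (hf.fun_sub analyticAt_const).exists_eventually_eq_pow (sub_self _) hne
  rcases (by omega : n = 1 ∨ 2 ≤ n) with rfl | hn
  · refine hφ' ?_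
    have hfφ' : (fun z => f z - f w) =ᶠ[𝓝 w] φ := by
      filter_upwards [hfφ] with z hz using hz.trans (pow_one _)
    rw [← hfφ'.deriv_eq, deriv_sub_const, hder]
  · set t := s ∩ {z | f z - f w = φ z ^ n}
    have ht : φ '' t ∈ 𝓝 0 := by
      rw [← hφw, ← (hφ.hasStrictDerivAt.map_nhds_eq hφ')]
      exact image_mem_map (inter_mem hs hfφ)
    refine not_injOn_pow_of_mem_nhds_zero hn ht ?_
    rintro _ ⟨a, ⟨has, ha⟩, rfl⟩ _ ⟨b, ⟨hbs, hb⟩, rfl⟩ hab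
    simp only [Set.mem_ofPred_eq] at ha hb hab
    rw [hinj has hbs (sub_left_inj.1 (ha.trans (hab.trans hb.symm)))]

lemma Polynomial.IsMonicOfDegree.exists_eval_eq_prod_sub {K : Type*} [Field K] [IsAlgClosed K]
    {P : K[X]} {n : ℕ} (hP : P.IsMonicOfDegree n) :
    ∃ r : Fin n → K, ∀ z, P.eval z = ∏ i, (z - r i) := by
  have hsplit : P.Splits := IsAlgClosed.splits P
  have hlen : P.roots.toList.length = n := by
    rw [Multiset.length_toList, splits_iff_card_roots.1 hsplit, hP.natDegree_eq]
  subst hlen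
  refine ⟨fun i => P.roots.toList[i.1], fun z => ?_⟩
  conv_lhs => rw [hsplit.eq_prod_roots_of_monic hP.monic]
  rw [Fin.prod_univ_fun_getElem P.roots.toList (z - ·), Multiset.prod_map_toList,
    eval_multiset_prod, Multiset.map_map]
  simp

lemma norm_eq_one_of_norm_prod_eq_one {ι 𝕜 : Type*} [Fintype ι] [NormedField 𝕜] {r : ι → 𝕜}
    (hprod : ‖∏ i, r i‖ = 1) (hr : ∀ i, 1 ≤ ‖r i‖) (i : ι) : ‖r i‖ = 1 := by
  have h : ∏ i, ‖r i‖₊ = 1 := by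
    rw [← nnnorm_prod]; exact NNReal.coe_eq_one.1 hprod
  have hr' : ∀ i ∈ univ, 1 ≤ ‖r i‖₊ := fun i _ => hr i
  exact congrArg NNReal.toReal ((prod_eq_one_iff_of_one_le' hr').1 h i (mem_univ i))

lemma isMonicOfDegree_derivative_X_add_sum {K : Type*} [Field K] [CharZero K] {d : ℕ}
    (hd : 2 ≤ d) {a : ℕ → K} (had : a d = 1 / d) :
    (derivative (X + ∑ k ∈ Icc 2 d, C (a k) * X ^ k)).IsMonicOfDegree (d - 1) := by
  set F : K[X] := X + ∑ k ∈ Icc 2 d, C (a k) * X ^ k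
  have hFdeg : F.natDegree ≤ d := by
    refine natDegree_add_le_of_degree_le (natDegree_X_le.trans (by omega))
      (natDegree_sum_le_of_forall_le _ _ fun k hk => ?_)
    exact (natDegree_C_mul_X_pow_le _ _).trans (mem_Icc.1 hk).2
  have hFd : F.coeff d = a d := by
    simp [F, coeff_X, show 1 ≠ d by omega, hd]
  rw [isMonicOfDegree_iff]
  refine ⟨(natDegree_derivative_le F).trans (by omega), ?_⟩
  rw [coeff_derivative, Nat.sub_add_cancel (by omega), hFd, had]
  have : ((d - 1 : ℕ) : K) + 1 = d := by
    rw [Nat.cast_sub (by omega)]; ring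
  rw [this, one_div_mul_cancel (Nat.cast_ne_zero.2 (by omega))]

lemma coeff_zero_derivative_X_add_sum {R : Type*} [Semiring R] (d : ℕ) (a : ℕ → R) :
    (derivative (X + ∑ k ∈ Icc 2 d, C (a k) * X ^ k)).coeff 0 = 1 := by
  simp [coeff_derivative]

/-- Let `f(z) = z + a₂z² + ⋯ + a_d z^d` with `a_d = 1/d` be injective on the open unit disc.
Then `f` has `d - 1` critical points counted with multiplicity, all lying on the unit
circle: `f'` factors as `f'(z) = ∏_{i < d-1} (z - rᵢ)` with every `|rᵢ| = 1`. -/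
theorem stmt_17 (d : ℕ) (hd : 2 ≤ d) (a : ℕ → ℂ) (had : a d = 1 / d)
    (f : ℂ → ℂ) (hf : ∀ z : ℂ, f z = z + ∑ k ∈ Finset.Icc 2 d, a k * z ^ k)
    (hinj : Set.InjOn f (Metric.ball (0 : ℂ) 1)) :
    ∃ r : Fin (d - 1) → ℂ, (∀ i, ‖r i‖ = 1) ∧
      ∀ z : ℂ, deriv f z = ∏ i, (z - r i) := by
  set F : ℂ[X] := X + ∑ k ∈ Icc 2 d, C (a k) * X ^ k
  have hfF : f = fun z => F.eval z := funext fun z => by simp [F, hf, eval_finsetSum]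
  have hderiv : ∀ z, deriv f z = (derivative F).eval z := by simp [hfF, Polynomial.deriv]
  obtain ⟨r, hr⟩ := (isMonicOfDegree_derivative_X_add_sum hd had).exists_eval_eq_prod_sub
  have hr_ge : ∀ i, 1 ≤ ‖r i‖ := fun i => by
    by_contra! hi
    have hcrit : deriv f (r i) = 0 := by
      rw [hderiv, hr]; exact prod_eq_zero (mem_univ i) (sub_self _)
    exact (hfF ▸ F.differentiable).analyticAt (r i) |>.deriv_ne_zero_of_injOn
      (Metric.isOpen_ball.mem_nhds (mem_ball_zero_iff.2 hi)) hinj hcrit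
  have hprod : ‖∏ i, r i‖ = 1 := by
    have h0 := hr 0
    rw [← coeff_zero_eq_eval_zero, coeff_zero_derivative_X_add_sum] at h0
    simpa [norm_prod] using congrArg norm h0.symm
  exact ⟨r, norm_eq_one_of_norm_prod_eq_one hprod hr_ge, fun z => (hderiv z).trans (hr z)⟩
end
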